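/- arXiv:1707.02939 — 6 statements merged into one kernel-verified Lean document; each statement's English description precedes it below -/
import Mathlib

section
/- Let p ≤ N be a positive natural number and let k₁, …, k_p ∈ ℕ with k = k₁ + ⋯ + k_p. Then ℙ-almost surely, E[X₁^{k₁} ⋯ X_p^{k_p} | S] = ((a)_{k₁} ⋯ (a)_{k_p} / (N·a)_k) · S^k. -/
/-
Tilting `P` by the density `∏ᵢ Xᵢ^{kᵢ} / E[Xᵢ^{kᵢ}]` (with `kᵢ = 0` for `i > p`) keeps the `Xᵢ`
independent and, since `x^k Γ(a, b)(dx) = ((a)_k / b^k) Γ(a + k, b)(dx)`, turns each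
`Xᵢ ~ Γ(a, b)` into `Xᵢ ~ Γ(a + kᵢ, b)`. Gamma laws with a common rate convolve by adding
shapes, so under the tilted measure `S ~ Γ(N a + k, b)`: the measure `A ↦ E[∏ⱼ Xⱼ^{kⱼ}; S ∈ A]`
is `∏ⱼ (a)_{kⱼ} / b^k` times `Γ(N a + k, b)`. Tilting the law `Γ(N a, b)` of `S` by `s^k` gives
`(N a)_k / b^k` times the same measure, so `E[∏ⱼ Xⱼ^{kⱼ} | S]` is the ratio of the two constants
times `S^k`.
-/

open MeasureTheory ProbabilityTheory Real Set
open scoped ENNReal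

lemma Real.Gamma_add_nat_eq_ascPochhammer_mul {a : ℝ} (ha : 0 < a) (k : ℕ) :
    Gamma (a + k) = (ascPochhammer ℝ k).eval a * Gamma a := by
  induction k with
  | zero => simp
  | succ n ih =>
    rw [Nat.cast_succ, ← add_assoc, Gamma_add_one (by positivity), ih, ascPochhammer_succ_eval]
    ring

@[to_additive]
lemma Fintype.prod_extend_zero {α β M : Type*} [Fintype α] [Fintype β] [CommMonoid M] {e : α → β}
    (he : Function.Injective e) (k : α → ℕ) (F : β → ℕ → M) (hF : ∀ b, F b 0 = 1) :
    ∏ b, F b (Function.extend e k 0 b) = ∏ a, F (e a) (k a) := by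
  refine (Fintype.prod_of_injective e he _ _ (fun b hb => ?_) fun a => by rw [he.extend_apply]).symm
  rw [Function.extend_apply' _ _ _ fun ⟨a, ha⟩ => hb ⟨a, ha⟩, Pi.zero_apply, hF]

section CondExp

variable {Ω β : Type*} [MeasurableSpace Ω] [mβ : MeasurableSpace β] {P : Measure Ω} {S : Ω → β}

lemma setIntegral_eq_toReal_withDensity_ofReal {f : Ω → ℝ} (hf₀ : 0 ≤ᵐ[P] f)
    (hf : AEStronglyMeasurable f P) {A : Set Ω} (hA : MeasurableSet A) :
    ∫ ω in A, f ω ∂P = ((P.withDensity fun ω => ENNReal.ofReal (f ω)) A).toReal := by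
  rw [withDensity_apply _ hA,
    integral_eq_lintegral_of_nonneg_ae (ae_restrict_of_ae hf₀) hf.restrict]

theorem condExp_comap_ae_eq_comp_of_map_withDensity [IsFiniteMeasure P] (hS : Measurable S)
    {f : Ω → ℝ} {g : β → ℝ} (hf : Integrable f P) (hg : Measurable g) (hf₀ : 0 ≤ᵐ[P] f)
    (hg₀ : 0 ≤ᵐ[P.map S] g)
    (h : (P.withDensity fun ω => ENNReal.ofReal (f ω)).map S
      = (P.map S).withDensity fun x => ENNReal.ofReal (g x)) :
    P[f | mβ.comap S] =ᵐ[P] g ∘ S := by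
  have hgS₀ : 0 ≤ᵐ[P] fun ω => g (S ω) := ae_of_ae_map hS.aemeasurable hg₀
  have hgSm : AEStronglyMeasurable (fun ω => g (S ω)) P := (hg.comp hS).aestronglyMeasurable
  have hsetIntegral : ∀ B, MeasurableSet B →
      ∫ ω in S ⁻¹' B, g (S ω) ∂P = ∫ ω in S ⁻¹' B, f ω ∂P := fun B hB => by
    rw [setIntegral_eq_toReal_withDensity_ofReal hgS₀ hgSm (hS hB),
      setIntegral_eq_toReal_withDensity_ofReal hf₀ hf.1 (hS hB),
      ← Measure.map_apply (μ := P.withDensity fun ω => ENNReal.ofReal (f ω)) hS hB, h,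
      withDensity_apply _ hB, withDensity_apply _ (hS hB), setLIntegral_map hB hg.ennreal_ofReal hS]
  have hgS : Integrable (g ∘ S) P := by
    refine ⟨hgSm, (hasFiniteIntegral_iff_ofReal hgS₀).2 ?_⟩
    have := (hasFiniteIntegral_iff_ofReal hf₀).1 hf.2
    rwa [← setLIntegral_univ, ← withDensity_apply _ MeasurableSet.univ, ← preimage_univ (f := S),
      ← Measure.map_apply hS MeasurableSet.univ, h, withDensity_apply _ MeasurableSet.univ,
      setLIntegral_univ, lintegral_map hg.ennreal_ofReal hS] at this
  refine (ae_eq_condExp_of_forall_setIntegral_eq hS.comap_le hf (fun _ _ _ => hgS.integrableOn)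
    ?_ ?_).symm
  · rintro _ ⟨B, hB, rfl⟩ _
    exact hsetIntegral B hB
  · exact (hg.comp (Measurable.of_comap_le le_rfl)).aestronglyMeasurable

end CondExp

namespace ProbabilityTheory

section Tilting

variable {Ω ι 𝓧 : Type*} [MeasurableSpace Ω] [MeasurableSpace 𝓧] [Fintype ι] {P : Measure Ω}
  {X : ι → Ω → 𝓧} {f : ι → 𝓧 → ℝ≥0∞}

lemma iIndepFun.withDensity_prod_apply_biInter (hX : iIndepFun X P) (hXm : ∀ i, Measurable (X i))
    (hf : ∀ i, Measurable (f i)) (hf₁ : ∀ i, ∫⁻ x, f i x ∂(P.map (X i)) = 1)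
    (s : Finset ι) {B : ι → Set 𝓧} (hB : ∀ i ∈ s, MeasurableSet (B i)) :
    P.withDensity (fun ω => ∏ i, f i (X i ω)) (⋂ i ∈ s, X i ⁻¹' B i)
      = ∏ i ∈ s, (P.map (X i)).withDensity (f i) (B i) := by
  classical
  set B' : ι → Set 𝓧 := fun i => if i ∈ s then B i else univ
  have hB' : ∀ i, MeasurableSet (B' i) := fun i => by
    by_cases hi : i ∈ s <;> simp [B', hi, hB]
  have hinter : ⋂ i ∈ s, X i ⁻¹' B i = ⋂ i, X i ⁻¹' B' i := by
    ext ω; simp [B']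
  have hmeas : MeasurableSet (⋂ i, X i ⁻¹' B' i) := .iInter fun i => hXm i (hB' i)
  have hindicator : ∀ ω, (⋂ i, X i ⁻¹' B' i).indicator (fun ω => ∏ i, f i (X i ω)) ω
      = ∏ i, (B' i).indicator (f i) (X i ω) := fun ω => by
    by_cases hω : ω ∈ ⋂ i, X i ⁻¹' B' i
    · rw [indicator_of_mem hω]
      refine Finset.prod_congr rfl fun i _ => ?_
      have hi : X i ω ∈ B' i := mem_iInter.1 hω i
      rw [indicator_of_mem hi]
    · obtain ⟨i, hi⟩ : ∃ i, X i ω ∉ B' i := by simpa using hω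
      rw [indicator_of_notMem hω,
        Finset.prod_eq_zero (Finset.mem_univ i) (indicator_of_notMem hi _)]
  have hfactor : ∀ i, ∫⁻ ω, (B' i).indicator (f i) (X i ω) ∂P
      = (P.map (X i)).withDensity (f i) (B' i) := fun i => by
    rw [withDensity_apply _ (hB' i), ← lintegral_indicator (hB' i),
      lintegral_map ((hf i).indicator (hB' i)) (hXm i)]
  rw [hinter, withDensity_apply _ hmeas, ← lintegral_indicator hmeas, lintegral_congr hindicator,
    lintegral_prod_eq_prod_lintegral_of_indepFun _ (fun i ω => (B' i).indicator (f i) (X i ω))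
      (hX.comp _ fun i => (hf i).indicator (hB' i))
      fun i => ((hf i).indicator (hB' i)).comp (hXm i)]
  simp_rw [hfactor]
  rw [← Finset.prod_subset (Finset.subset_univ s) fun i _ hi => by
    simp [B', hi, withDensity_apply, hf₁]]
  exact Finset.prod_congr rfl fun i hi => by simp [B', hi]

lemma iIndepFun.isProbabilityMeasure_withDensity_prod (hX : iIndepFun X P)
    (hXm : ∀ i, Measurable (X i)) (hf : ∀ i, Measurable (f i))
    (hf₁ : ∀ i, ∫⁻ x, f i x ∂(P.map (X i)) = 1) :
    IsProbabilityMeasure (P.withDensity fun ω => ∏ i, f i (X i ω)) :=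
  ⟨by simpa using hX.withDensity_prod_apply_biInter hXm hf hf₁ ∅ (B := fun _ => univ) (by simp)⟩

lemma iIndepFun.map_withDensity_prod (hX : iIndepFun X P) (hXm : ∀ i, Measurable (X i))
    (hf : ∀ i, Measurable (f i)) (hf₁ : ∀ i, ∫⁻ x, f i x ∂(P.map (X i)) = 1) (i : ι) :
    (P.withDensity fun ω => ∏ i, f i (X i ω)).map (X i) = (P.map (X i)).withDensity (f i) := by
  ext B hB
  simpa [Measure.map_apply (hXm i) hB] using
    hX.withDensity_prod_apply_biInter hXm hf hf₁ {i} (B := fun _ => B) (by simp [hB])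

lemma iIndepFun.withDensity_prod (hX : iIndepFun X P) (hXm : ∀ i, Measurable (X i))
    (hf : ∀ i, Measurable (f i)) (hf₁ : ∀ i, ∫⁻ x, f i x ∂(P.map (X i)) = 1) :
    iIndepFun X (P.withDensity fun ω => ∏ i, f i (X i ω)) := by
  refine iIndepFun_iff_measure_inter_preimage_eq_mul.2 fun s B hB => ?_
  rw [hX.withDensity_prod_apply_biInter hXm hf hf₁ s hB]
  refine Finset.prod_congr rfl fun i hi => ?_
  rw [← Measure.map_apply (hXm i) (hB i hi), hX.map_withDensity_prod hXm hf hf₁]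

end Tilting


section GammaDistribution

variable {a a' r : ℝ}

lemma measurable_gammaPDF (a r : ℝ) : Measurable (gammaPDF a r) :=
  (measurable_gammaPDFReal a r).ennreal_ofReal

lemma ae_pos_gammaMeasure : ∀ᵐ x ∂gammaMeasure a r, 0 < x := by
  rw [gammaMeasure, ae_withDensity_iff (measurable_gammaPDF a r)]
  filter_upwards [Measure.ae_ne volume 0] with x hx0 hx
  exact lt_of_le_of_ne (not_lt.1 fun hneg => hx (gammaPDF_of_neg hneg)) hx0.symm

noncomputable def gammaMoment (a r : ℝ) (k : ℕ) : ℝ := (ascPochhammer ℝ k).eval a / r ^ k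

lemma gammaMoment_pos (ha : 0 < a) (hr : 0 < r) (k : ℕ) : 0 < gammaMoment a r k :=
  div_pos (ascPochhammer_pos k a ha) (pow_pos hr k)

@[simp]
lemma gammaMoment_zero (a r : ℝ) : gammaMoment a r 0 = 1 := by simp [gammaMoment]

lemma pow_mul_gammaPDFReal (ha : 0 < a) (hr : 0 < r) (k : ℕ) {x : ℝ} (hx : 0 < x) :
    x ^ k * gammaPDFReal a r x = gammaMoment a r k * gammaPDFReal (a + k) r x := by
  have := ascPochhammer_pos k a ha
  rw [gammaMoment, gammaPDFReal, gammaPDFReal, if_pos hx.le, if_pos hx.le,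
    Gamma_add_nat_eq_ascPochhammer_mul ha, add_sub_right_comm, rpow_add_natCast hx.ne',
    rpow_add_natCast hr.ne']
  field_simp

lemma gammaMeasure_withDensity_const_mul_pow (ha : 0 < a) (hr : 0 < r) {c : ℝ} (hc : 0 ≤ c)
    (k : ℕ) :
    (gammaMeasure a r).withDensity (fun x => ENNReal.ofReal (c * x ^ k))
      = ENNReal.ofReal (c * gammaMoment a r k) • gammaMeasure (a + k) r := by
  rw [gammaMeasure, gammaMeasure, ← withDensity_mul _ (measurable_gammaPDF a r) (by fun_prop),
    ← withDensity_smul' _ _ ENNReal.ofReal_ne_top]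
  refine withDensity_congr_ae ?_
  filter_upwards [Measure.ae_ne volume 0] with x hx
  rcases hx.lt_or_gt with hneg | hpos
  · simp [gammaPDF_of_neg hneg]
  · have := gammaMoment_pos ha hr k
    simp only [Pi.mul_apply, Pi.smul_apply, smul_eq_mul, gammaPDF]
    rw [mul_comm, ← ENNReal.ofReal_mul (by positivity), ← ENNReal.ofReal_mul (by positivity),
      mul_assoc, pow_mul_gammaPDFReal ha hr k hpos, mul_assoc]

lemma gammaPDFReal_mul_gammaPDFReal_scale (ha : 0 < a) (ha' : 0 < a') (hr : 0 < r) {s u : ℝ}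
    (hs : 0 < s) (hu₀ : 0 < u) (hu₁ : u < 1) :
    s * (gammaPDFReal a r (s * u) * gammaPDFReal a' r (-(s * u) + s))
      = gammaPDFReal (a + a') r s * betaPDFReal a a' u := by
  have h1u : 0 < 1 - u := by linarith
  have hsu : -(s * u) + s = s * (1 - u) := by ring
  rw [hsu, gammaPDFReal, gammaPDFReal, gammaPDFReal, betaPDFReal, beta, if_pos (by positivity),
    if_pos (by positivity), if_pos hs.le, if_pos ⟨hu₀, hu₁⟩, mul_rpow hs.le hu₀.le,
    mul_rpow hs.le h1u.le, rpow_add hr, (by ring : a + a' - 1 = (a - 1) + (a' - 1) + 1),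
    rpow_add hs, rpow_add hs, rpow_one,
    (by ring : -(r * s) = -(r * (s * u)) + -(r * (s * (1 - u)))), exp_add]
  have := Gamma_pos_of_pos ha
  have := Gamma_pos_of_pos ha'
  have := Gamma_pos_of_pos (add_pos ha ha')
  field_simp

lemma gammaPDF_mul_gammaPDF_scale (ha : 0 < a) (ha' : 0 < a') (hr : 0 < r) {s u : ℝ}
    (hs : 0 < s) (hu₀ : u ≠ 0) (hu₁ : u ≠ 1) :
    ENNReal.ofReal s * (gammaPDF a r (s * u) * gammaPDF a' r (-(s * u) + s))
      = gammaPDF (a + a') r s * betaPDF a a' u := by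
  rcases hu₀.lt_or_gt with hneg | hpos
  · rw [gammaPDF_of_neg (mul_neg_of_pos_of_neg hs hneg), betaPDF_eq_zero_of_nonpos hneg.le]
    simp
  rcases hu₁.lt_or_gt with hlt | hgt
  · rw [gammaPDF, gammaPDF, gammaPDF, betaPDF, ← ENNReal.ofReal_mul (gammaPDFReal_nonneg ha hr _),
      ← ENNReal.ofReal_mul hs.le, ← ENNReal.ofReal_mul (gammaPDFReal_nonneg (add_pos ha ha') hr _),
      gammaPDFReal_mul_gammaPDFReal_scale ha ha' hr hs hpos hlt]
  · rw [gammaPDF_of_neg (by nlinarith : -(s * u) + s < 0), betaPDF_eq_zero_of_one_le hgt.le]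
    simp

lemma gammaPDF_lconvolution_gammaPDF (ha : 0 < a) (ha' : 0 < a') (hr : 0 < r) {s : ℝ}
    (hs : s ≠ 0) : (gammaPDF a r ⋆ₗ gammaPDF a' r) s = gammaPDF (a + a') r s := by
  rw [lconvolution_def]
  rcases hs.lt_or_gt with hneg | hpos
  · rw [gammaPDF_of_neg hneg, ← lintegral_zero]
    refine lintegral_congr fun y => ?_
    rcases lt_or_ge y 0 with hy | hy
    · rw [gammaPDF_of_neg hy, zero_mul]
    · rw [gammaPDF_of_neg (by linarith : -y + s < 0), mul_zero]
  have hF : Measurable fun y => gammaPDF a r y * gammaPDF a' r (-y + s) :=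
    (measurable_gammaPDF a r).mul ((measurable_gammaPDF a' r).comp (by fun_prop))
  -- substituting `y = s u` turns the convolution integral into a Beta integral
  calc ∫⁻ y, gammaPDF a r y * gammaPDF a' r (-y + s)
      = ∫⁻ y, gammaPDF a r y * gammaPDF a' r (-y + s)
          ∂(ENNReal.ofReal |s| • Measure.map (s * ·) volume) := by
        rw [Real.smul_map_volume_mul_left hpos.ne']
    _ = ∫⁻ u, ENNReal.ofReal s * (gammaPDF a r (s * u) * gammaPDF a' r (-(s * u) + s)) := by
        rw [lintegral_smul_measure, lintegral_map hF (measurable_const_mul s), abs_of_pos hpos,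
          smul_eq_mul]
        exact (lintegral_const_mul _ (hF.comp (measurable_const_mul s))).symm
    _ = ∫⁻ u, gammaPDF (a + a') r s * betaPDF a a' u := by
        refine lintegral_congr_ae ?_
        filter_upwards [Measure.ae_ne volume 0, Measure.ae_ne volume 1] with u hu₀ hu₁
        exact gammaPDF_mul_gammaPDF_scale ha ha' hr hpos hu₀ hu₁
    _ = gammaPDF (a + a') r s := by
        rw [lintegral_const_mul (f := betaPDF a a') _ (measurable_betaPDFReal a a').ennreal_ofReal,
          lintegral_betaPDF_eq_one ha ha', mul_one]

lemma gammaMeasure_conv_gammaMeasure (ha : 0 < a) (ha' : 0 < a') (hr : 0 < r) :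
    gammaMeasure a r ∗ gammaMeasure a' r = gammaMeasure (a + a') r := by
  rw [gammaMeasure, gammaMeasure, gammaMeasure,
    conv_withDensity_eq_lconvolution (measurable_gammaPDF a r) (measurable_gammaPDF a' r)]
  refine withDensity_congr_ae ?_
  filter_upwards [Measure.ae_ne volume 0] with s hs
  exact gammaPDF_lconvolution_gammaPDF ha ha' hr hs

end GammaDistribution

section GammaSample

variable {Ω ι : Type*} [MeasurableSpace Ω] {P : Measure Ω} {X : ι → Ω → ℝ} {a b : ℝ}

lemma ae_forall_pos_of_map_eq_gammaMeasure [Countable ι] (hXm : ∀ i, Measurable (X i))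
    (hlaw : ∀ i, P.map (X i) = gammaMeasure a b) : ∀ᵐ ω ∂P, ∀ i, 0 < X i ω :=
  ae_all_iff.2 fun i => ae_of_ae_map (hXm i).aemeasurable ((hlaw i) ▸ ae_pos_gammaMeasure)

lemma iIndepFun.map_finsetSum_eq_gammaMeasure [IsProbabilityMeasure P]
    (hX : iIndepFun X P) (hXm : ∀ i, Measurable (X i)) {c : ι → ℝ} {r : ℝ} (hc : ∀ i, 0 < c i)
    (hr : 0 < r) (hlaw : ∀ i, P.map (X i) = gammaMeasure (c i) r) {s : Finset ι}
    (hs : s.Nonempty) :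
    P.map (∑ i ∈ s, X i) = gammaMeasure (∑ i ∈ s, c i) r := by
  induction hs using Finset.Nonempty.cons_induction with
  | singleton i => simpa using hlaw i
  | cons i s hi hs ih =>
    rw [Finset.sum_cons, Finset.sum_cons,
      IndepFun.map_add_eq_map_conv_map (hXm i) (by fun_prop : Measurable (∑ j ∈ s, X j))
        (hX.indepFun_finsetSum_of_notMem hXm hi).symm, hlaw i, ih]
    exact gammaMeasure_conv_gammaMeasure (hc i) (Finset.sum_pos (fun j _ => hc j) hs) hr

variable [Fintype ι]

lemma iIndepFun.map_sum_eq_gammaMeasure [Nonempty ι] (hX : iIndepFun X P)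
    (hXm : ∀ i, Measurable (X i)) (ha : 0 < a) (hb : 0 < b)
    (hlaw : ∀ i, P.map (X i) = gammaMeasure a b) :
    P.map (fun ω => ∑ i, X i ω) = gammaMeasure (Fintype.card ι * a) b := by
  have := hX.isProbabilityMeasure
  have := hX.map_finsetSum_eq_gammaMeasure hXm (fun _ => ha) hb hlaw Finset.univ_nonempty
  rwa [Finset.sum_fn, Finset.sum_const, Finset.card_univ, nsmul_eq_mul] at this

lemma ae_nonneg_prod_pow (hXm : ∀ i, Measurable (X i))
    (hlaw : ∀ i, P.map (X i) = gammaMeasure a b) (K : ι → ℕ) :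
    ∀ᵐ ω ∂P, 0 ≤ ∏ i, X i ω ^ K i := by
  filter_upwards [ae_forall_pos_of_map_eq_gammaMeasure hXm hlaw] with ω hω
  exact Finset.prod_nonneg fun i _ => pow_nonneg (hω i).le _

lemma iIndepFun.map_sum_withDensity_prod_pow [Nonempty ι] (hX : iIndepFun X P)
    (hXm : ∀ i, Measurable (X i)) (ha : 0 < a) (hb : 0 < b)
    (hlaw : ∀ i, P.map (X i) = gammaMeasure a b) (K : ι → ℕ) :
    (P.withDensity fun ω => ENNReal.ofReal (∏ i, X i ω ^ K i)).map (fun ω => ∑ i, X i ω)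
      = ENNReal.ofReal (∏ i, gammaMoment a b (K i))
          • gammaMeasure (Fintype.card ι * a + ∑ i, K i) b := by
  have hm := fun i => gammaMoment_pos ha hb (K i)
  set f : ι → ℝ → ℝ≥0∞ := fun i x => ENNReal.ofReal ((gammaMoment a b (K i))⁻¹ * x ^ K i)
  have hf : ∀ i, Measurable (f i) := fun i => by fun_prop
  have hlawK : ∀ i, (P.map (X i)).withDensity (f i) = gammaMeasure (a + K i) b := fun i => by
    rw [hlaw, gammaMeasure_withDensity_const_mul_pow ha hb (inv_nonneg.2 (hm i).le),
      inv_mul_cancel₀ (hm i).ne', ENNReal.ofReal_one, one_smul]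
  have hf₁ : ∀ i, ∫⁻ x, f i x ∂(P.map (X i)) = 1 := fun i => by
    have := isProbabilityMeasure_gammaMeasure (a := a + K i) (by positivity) hb
    rw [← setLIntegral_univ, ← withDensity_apply _ MeasurableSet.univ, hlawK, measure_univ]
  have hdensity : (P.withDensity fun ω => ENNReal.ofReal (∏ i, X i ω ^ K i))
      = ENNReal.ofReal (∏ i, gammaMoment a b (K i)) • P.withDensity fun ω => ∏ i, f i (X i ω) := by
    rw [← withDensity_smul' _ _ ENNReal.ofReal_ne_top]
    refine withDensity_congr_ae ?_
    filter_upwards [ae_forall_pos_of_map_eq_gammaMeasure hXm hlaw] with ω hω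
    simp only [Pi.smul_apply, smul_eq_mul, f]
    rw [← ENNReal.ofReal_prod_of_nonneg fun i _ => by have := hm i; have := hω i; positivity,
      ← ENNReal.ofReal_mul (Finset.prod_nonneg fun i _ => (hm i).le), ← Finset.prod_mul_distrib]
    exact congrArg _ (Finset.prod_congr rfl fun i _ => (mul_inv_cancel_left₀ (hm i).ne' _).symm)
  have := hX.isProbabilityMeasure_withDensity_prod hXm hf hf₁
  have hsum := (hX.withDensity_prod hXm hf hf₁).map_finsetSum_eq_gammaMeasure hXm
    (fun i => by positivity) hb (fun i => (hX.map_withDensity_prod hXm hf hf₁ i).trans (hlawK i))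
    Finset.univ_nonempty
  rw [Finset.sum_fn, Finset.sum_add_distrib, Finset.sum_const, Finset.card_univ, nsmul_eq_mul]
    at hsum
  rw [hdensity, Measure.map_smul, hsum, Nat.cast_sum]

lemma iIndepFun.integrable_prod_pow [Nonempty ι] (hX : iIndepFun X P)
    (hXm : ∀ i, Measurable (X i)) (ha : 0 < a) (hb : 0 < b)
    (hlaw : ∀ i, P.map (X i) = gammaMeasure a b) (K : ι → ℕ) :
    Integrable (fun ω => ∏ i, X i ω ^ K i) P := by
  have := isProbabilityMeasure_gammaMeasure
    (a := Fintype.card ι * a + ∑ i, K i) (by positivity) hb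
  refine ⟨(by fun_prop : Measurable _).aestronglyMeasurable,
    (hasFiniteIntegral_iff_ofReal (ae_nonneg_prod_pow hXm hlaw K)).2 ?_⟩
  have hmass := congrArg (· univ) (hX.map_sum_withDensity_prod_pow hXm ha hb hlaw K)
  simp only [Measure.map_apply (by fun_prop : Measurable fun ω => ∑ i, X i ω) MeasurableSet.univ,
    preimage_univ, withDensity_apply _ MeasurableSet.univ, setLIntegral_univ, Measure.smul_apply,
    measure_univ, smul_eq_mul, mul_one] at hmass
  exact hmass ▸ ENNReal.ofReal_lt_top

end GammaSample

end ProbabilityTheory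

theorem stmt_0_general {Ω : Type*} [MeasurableSpace Ω] (P : Measure Ω) [IsProbabilityMeasure P]
    (a b : ℝ) (ha : 0 < a) (hb : 0 < b) (N : ℕ) (hN : 1 ≤ N)
    (X : Fin N → Ω → ℝ) (hXmeas : ∀ i, Measurable (X i))
    (hXindep : iIndepFun X P)
    (hXlaw : ∀ i, Measure.map (X i) P = gammaMeasure a b)
    (S : Ω → ℝ) (hS : S = fun ω => ∑ i, X i ω)
    (p : ℕ) (hpN : p ≤ N) (k : Fin p → ℕ) :
    P[fun ω => ∏ j : Fin p, (X (Fin.castLE hpN j) ω) ^ (k j)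
        | MeasurableSpace.comap S (borel ℝ)]
      =ᵐ[P] fun ω =>
        ((∏ j : Fin p, (ascPochhammer ℝ (k j)).eval a)
            / (ascPochhammer ℝ (∑ j, k j)).eval ((N : ℝ) * a))
          * (S ω) ^ (∑ j, k j) := by
  have : Nonempty (Fin N) := ⟨⟨0, hN⟩⟩
  set K : Fin N → ℕ := Function.extend (Fin.castLE hpN) k 0
  have hinj := Fin.castLE_injective hpN
  have hsumK : ∑ i, K i = ∑ j, k j := Fintype.sum_extend_zero hinj k (fun _ n => n) fun _ => rfl
  have hprodK : (fun ω => ∏ j, X (Fin.castLE hpN j) ω ^ k j) = fun ω => ∏ i, X i ω ^ K i :=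
    funext fun ω =>
      (Fintype.prod_extend_zero hinj k (fun i n => X i ω ^ n) fun _ => pow_zero _).symm
  have hmomentK : ∏ i, gammaMoment a b (K i)
      = (∏ j, (ascPochhammer ℝ (k j)).eval a) / b ^ ∑ j, k j := by
    rw [Fintype.prod_extend_zero hinj k (fun _ => gammaMoment a b) fun _ => gammaMoment_zero a b]
    simp only [gammaMoment, Finset.prod_div_distrib, Finset.prod_pow_eq_pow_sum]
  have hNa : 0 < (N : ℝ) * a := by positivity
  set c := (∏ j, (ascPochhammer ℝ (k j)).eval a) / (ascPochhammer ℝ (∑ j, k j)).eval ((N : ℝ) * a)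
  have hc : 0 ≤ c := div_nonneg (Finset.prod_nonneg fun j _ => (ascPochhammer_pos _ _ ha).le)
    (ascPochhammer_pos _ _ hNa).le
  have hSm : Measurable S := hS ▸ by fun_prop
  have hlawS : P.map S = gammaMeasure (N * a) b := by
    rw [hS, hXindep.map_sum_eq_gammaMeasure hXmeas ha hb hXlaw, Fintype.card_fin]
  rw [← BorelSpace.measurable_eq, hprodK]
  refine condExp_comap_ae_eq_comp_of_map_withDensity hSm
    (hXindep.integrable_prod_pow hXmeas ha hb hXlaw K) (g := fun x => c * x ^ ∑ j, k j)
    (by fun_prop) ?_ ?_ ?_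
  · exact ae_nonneg_prod_pow hXmeas hXlaw K
  · filter_upwards [hlawS ▸ ae_pos_gammaMeasure] with x hx
    positivity
  · rw [hS, hXindep.map_sum_withDensity_prod_pow hXmeas ha hb hXlaw K, ← hS, hlawS,
      gammaMeasure_withDensity_const_mul_pow hNa hb hc, Fintype.card_fin, hsumK, hmomentK]
    have := (ascPochhammer_pos (∑ j, k j) _ hNa).ne'
    congr 2
    simp only [c, gammaMoment]
    field_simp

/-- Conditional expectation of a monomial in iid Gamma random variables given their sum:
`E[X₁^{k₁} ⋯ X_p^{k_p} | S] = ((a)_{k₁} ⋯ (a)_{k_p} / (N·a)_k) · S^k` a.s. -/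
theorem stmt_0 {Ω : Type*} [MeasurableSpace Ω] (P : Measure Ω) [IsProbabilityMeasure P]
    (a b : ℝ) (ha : 0 < a) (hb : 0 < b) (N : ℕ) (hN : 1 ≤ N)
    (X : Fin N → Ω → ℝ) (hXmeas : ∀ i, Measurable (X i))
    (hXindep : iIndepFun X P)
    (hXlaw : ∀ i, Measure.map (X i) P = gammaMeasure a b)
    (S : Ω → ℝ) (hS : S = fun ω => ∑ i, X i ω)
    (p : ℕ) (hp : 0 < p) (hpN : p ≤ N) (k : Fin p → ℕ) :
    P[fun ω => ∏ j : Fin p, (X (Fin.castLE hpN j) ω) ^ (k j)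
        | MeasurableSpace.comap S (borel ℝ)]
      =ᵐ[P] fun ω =>
        ((∏ j : Fin p, (ascPochhammer ℝ (k j)).eval a)
            / (ascPochhammer ℝ (∑ j, k j)).eval ((N : ℝ) * a))
          * (S ω) ^ (∑ j, k j) :=
  stmt_0_general P a b ha hb N hN X hXmeas hXindep hXlaw S hS p hpN k
end

section
/- Let s, t, b > 0 be real numbers and k ∈ ℕ. Then for every z ∈ ℝ, ∫_ℝ y^k · γ_{s,b}(y) · γ_{t,b}(z − y) dy = ((s)_k / (s + t)_k) · z^k · γ_{s+t,b}(z). -/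
/-!
Since `Γ(s + k) = Γ(s) (s)_k`, multiplying by `y ^ k` turns a Gamma density into a multiple of
another one: `y ^ k γ_{s,b}(y) = ((s)_k / b ^ k) γ_{s+k,b}(y)`. So the integral is `(s)_k / b ^ k`
times the convolution `γ_{s+k,b} * γ_{t,b} = γ_{s+t+k,b}`, and the same identity at shape `s + t`
rewrites this as `((s)_k / (s+t)_k) z ^ k γ_{s+t,b}(z)`. On `0 < y < z` the product
`γ_{p,b}(y) γ_{q,b}(z - y)` is `y^(p-1) (z-y)^(q-1)` times a factor independent of `y`, so the
convolution comes down to the Beta integral `∫₀^z y^(p-1) (z-y)^(q-1) dy = z^(p+q-1) B(p, q)`.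
-/

open MeasureTheory

/-- The Gamma probability density with shape `s > 0` and rate `b > 0`:
`γ_{s,b}(x) = b^s x^{s−1} e^{−bx}/Γ(s)` for `x > 0` and `0` for `x ≤ 0`. -/
noncomputable def gammaDensity (s b : ℝ) (x : ℝ) : ℝ :=
  if 0 < x then b ^ s * x ^ (s - 1) * Real.exp (-(b * x)) / Real.Gamma s else 0

open Real Set

theorem integral_rpow_mul_sub_rpow {p q z : ℝ} (hp : 0 < p) (hq : 0 < q) (hz : 0 < z) :
    ∫ y in 0..z, y ^ (p - 1) * (z - y) ^ (q - 1) =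
      z ^ (p + q - 1) * ProbabilityTheory.beta p q := by
  have hbeta := Complex.betaIntegral_scaled p q hz
  rw [Complex.betaIntegral_eq_Gamma_mul_div _ _ (by simpa) (by simpa)] at hbeta
  apply Complex.ofReal_injective
  rw [← intervalIntegral.integral_ofReal]
  convert hbeta using 1
  · refine intervalIntegral.integral_congr fun y hy => ?_
    rw [uIcc_of_le hz.le] at hy
    simp only [Complex.ofReal_mul, Complex.ofReal_cpow hy.1,
      Complex.ofReal_cpow (sub_nonneg.2 hy.2)]
    push_cast; rfl
  · rw [ProbabilityTheory.beta, ← Complex.ofReal_add, Complex.Gamma_ofReal, Complex.Gamma_ofReal,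
      Complex.Gamma_ofReal]
    push_cast [Complex.ofReal_cpow hz.le]; rfl

theorem Real.Gamma_add_nat_eq_mul_ascPochhammer {s : ℝ} (hs : 0 < s) (k : ℕ) :
    Gamma (s + k) = Gamma s * (ascPochhammer ℝ k).eval s := by
  induction k with
  | zero => simp
  | succ k ih =>
    rw [ascPochhammer_succ_eval, ← mul_assoc, ← ih, Nat.cast_succ, ← add_assoc,
      Gamma_add_one (by positivity)]
    ring

theorem gammaDensity_mul_sub_eq_zero_of_notMem {p q b z y : ℝ} (hy : y ∉ Ioo 0 z) :
    gammaDensity p b y * gammaDensity q b (z - y) = 0 := by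
  rw [mem_Ioo, not_and_or, not_lt, not_lt] at hy
  rcases hy with hy | hy
  · simp [gammaDensity, hy.not_gt]
  · simp [gammaDensity, (sub_nonpos.2 hy).not_gt]

theorem gammaDensity_mul_sub_of_mem {p q b z y : ℝ} (hy : y ∈ Ioo 0 z) :
    gammaDensity p b y * gammaDensity q b (z - y) =
      b ^ p * b ^ q * exp (-(b * z)) / (Gamma p * Gamma q) * (y ^ (p - 1) * (z - y) ^ (q - 1)) := by
  have hexp : exp (-(b * y)) * exp (-(b * (z - y))) = exp (-(b * z)) := by
    rw [← exp_add]; ring_nf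
  rw [gammaDensity, gammaDensity, if_pos hy.1, if_pos (sub_pos.2 hy.2), ← hexp]
  ring

theorem integral_gammaDensity_mul_sub {p q b : ℝ} (hp : 0 < p) (hq : 0 < q) (hb : 0 < b)
    (z : ℝ) :
    ∫ y, gammaDensity p b y * gammaDensity q b (z - y) = gammaDensity (p + q) b z := by
  rw [← setIntegral_eq_integral_of_forall_compl_eq_zero
    fun _ => gammaDensity_mul_sub_eq_zero_of_notMem]
  rcases le_or_gt z 0 with hz | hz
  · simp [gammaDensity, hz.not_gt]
  rw [setIntegral_congr_fun measurableSet_Ioo fun _ => gammaDensity_mul_sub_of_mem,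
    integral_const_mul, ← integral_Ioc_eq_integral_Ioo, ← intervalIntegral.integral_of_le hz.le,
    integral_rpow_mul_sub_rpow hp hq hz, ProbabilityTheory.beta, gammaDensity, if_pos hz,
    rpow_add hb]
  have := Gamma_pos_of_pos hp
  have := Gamma_pos_of_pos hq
  have := Gamma_pos_of_pos (add_pos hp hq)
  field_simp

theorem pow_mul_gammaDensity {s b : ℝ} (hs : 0 < s) (hb : 0 < b) (k : ℕ) (y : ℝ) :
    y ^ k * gammaDensity s b y =
      (ascPochhammer ℝ k).eval s / b ^ k * gammaDensity (s + k) b y := by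
  rw [gammaDensity, gammaDensity]
  split_ifs with hy
  · rw [add_sub_right_comm, rpow_add_natCast hy.ne', rpow_add_natCast hb.ne',
      Gamma_add_nat_eq_mul_ascPochhammer hs]
    have := Gamma_pos_of_pos hs
    have := ascPochhammer_pos k s hs
    field_simp
  · simp

/-- Moment-weighted convolution identity for Gamma densities:
`∫ y^k γ_{s,b}(y) γ_{t,b}(z−y) dy = ((s)_k/(s+t)_k) z^k γ_{s+t,b}(z)`. -/
theorem stmt_3 (s t b : ℝ) (hs : 0 < s) (ht : 0 < t) (hb : 0 < b) (k : ℕ) (z : ℝ) :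
    ∫ y : ℝ, y ^ k * gammaDensity s b y * gammaDensity t b (z - y)
      = ((ascPochhammer ℝ k).eval s / (ascPochhammer ℝ k).eval (s + t))
          * z ^ k * gammaDensity (s + t) b z := by
  have hst := add_pos hs ht
  calc ∫ y, y ^ k * gammaDensity s b y * gammaDensity t b (z - y)
      = (ascPochhammer ℝ k).eval s / b ^ k *
          ∫ y, gammaDensity (s + k) b y * gammaDensity t b (z - y) := by
        simp_rw [pow_mul_gammaDensity hs hb, mul_assoc, integral_const_mul]
    _ = (ascPochhammer ℝ k).eval s / b ^ k * gammaDensity (s + t + k) b z := by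
        rw [integral_gammaDensity_mul_sub (by positivity) ht hb, add_right_comm]
    _ = _ := by
        rw [mul_assoc, pow_mul_gammaDensity hst hb]
        have := ascPochhammer_pos k _ hst
        field_simp
end

section
/- Let s ⊆ ι be a nonempty finite set and i ∈ s. Then κ(s) = χ(s) − Σ_t κ(t) · χ(s \ t), where the sum runs over all finite sets t with i ∈ t ⊆ s and t ≠ s. -/
/-!
Adding the block `s \ t` to a partition of `t` identifies the partitions of `t` with the
partitions of `s` having `s \ t` as a block, so `κ(t) χ(s \ t)` is a sum over such partitions
of `s`. Summed over `t`, a partition `P` of `s` into `k` blocks occurs once for every block not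
containing `i`, that is `k - 1` times, each time with the coefficient `μ(k - 1)` of a
partition into `k - 1` blocks. Since `μ(k) + (k - 1) μ(k - 1)` vanishes unless `k = 1`, only
the one-block partition survives in `κ(s) + Σ_t κ(t) χ(s \ t)`, and it contributes `χ(s)`.
-/

open Finset

/-- The cumulant `κ(t) = Σ_P (−1)^{|P|−1} (|P|−1)! ∏_{b ∈ P} χ(b)`, summing over all
partitions `P` of `t` into nonempty blocks. -/
noncomputable def cumulant {ι R : Type*} [DecidableEq ι] [CommRing R]
    (χ : Finset ι → R) (t : Finset ι) : R :=
  ∑ P : Finpartition t, (-1 : R) ^ (P.parts.card - 1) * ((P.parts.card - 1).factorial : R)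
    * ∏ b ∈ P.parts, χ b

namespace Finpartition

lemma card_parts_eq_one_iff {α : Type*} [Lattice α] [OrderBot α] {a : α} (ha : a ≠ ⊥)
    (P : Finpartition a) : #P.parts = 1 ↔ P = indiscrete ha := by
  refine ⟨fun h ↦ ?_, fun h ↦ by rw [h, indiscrete_parts, card_singleton]⟩
  obtain ⟨b, hb⟩ := card_eq_one.1 h
  ext : 1
  rw [hb, indiscrete_parts, singleton_inj]
  simpa [hb] using P.sup_parts

variable {α : Type*} [GeneralizedBooleanAlgebra α] {a b c : α}

lemma notMem_parts_of_disjoint (P : Finpartition a) (hb : b ≠ ⊥) (hab : Disjoint a b) :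
    b ∉ P.parts :=
  fun h ↦ hb <| hab.symm.eq_bot_of_le <| P.le h

variable [DecidableEq α]

lemma sup_erase_eq_sdiff (P : Finpartition c) (hb : b ∈ P.parts) :
    (P.parts.erase b).sup id = c \ b := by
  have hdisj : Disjoint ((P.parts.erase b).sup id) b :=
    (P.supIndep (erase_subset b _) hb (notMem_erase b _)).symm
  conv_rhs => rw [← P.sup_parts, ← insert_erase hb, sup_insert, id, sup_comm]
  exact hdisj.sup_sdiff_cancel_right.symm

@[simps]
def extendEquiv (hb : b ≠ ⊥) (hab : Disjoint a b) (hc : a ⊔ b = c) :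
    Finpartition a ≃ {P : Finpartition c // b ∈ P.parts} where
  toFun Q := ⟨Q.extend hb hab hc, mem_insert_self _ _⟩
  invFun P := P.1.ofSubset (erase_subset b _) <| by
    rw [sup_erase_eq_sdiff P.1 P.2, ← hc, hab.sup_sdiff_cancel_right]
  left_inv Q := Finpartition.ext <| erase_insert <| Q.notMem_parts_of_disjoint hb hab
  right_inv P := Subtype.ext <| Finpartition.ext <| insert_erase P.2

lemma card_filter_sdiff_mem_parts {ι : Type*} [DecidableEq ι] {s : Finset ι}
    (P : Finpartition s) {i : ι} (hi : i ∈ s) :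
    #{t ∈ s.powerset | (i ∈ t ∧ t ≠ s) ∧ s \ t ∈ P.parts} = #P.parts - 1 := by
  rw [← card_erase_of_mem (P.part_mem.2 hi)]
  refine card_nbij' (s \ ·) (s \ ·) ?_ ?_ ?_ ?_
  · intro t ht
    rw [mem_coe, mem_filter, mem_powerset] at ht
    obtain ⟨-, ⟨hit, -⟩, hP⟩ := ht
    exact mem_erase.2 ⟨fun h ↦ (mem_sdiff.1 (h ▸ P.mem_part hi)).2 hit, hP⟩
  · intro c hc
    obtain ⟨hci, hc⟩ := mem_erase.1 (mem_coe.1 hc)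
    have hcs : c ⊆ s := P.le hc
    refine mem_filter.2 ⟨mem_powerset.2 sdiff_subset, ⟨?_, ?_⟩, ?_⟩
    · exact mem_sdiff.2 ⟨hi, fun hic ↦ hci (P.part_eq_of_mem hc hic).symm⟩
    · exact (sdiff_ssubset hcs (P.nonempty_of_mem_parts hc)).ne
    · rwa [Finset.sdiff_sdiff_eq_self hcs]
  · intro t ht
    exact Finset.sdiff_sdiff_eq_self (mem_powerset.1 (mem_filter.1 (mem_coe.1 ht)).1)
  · intro c hc
    exact Finset.sdiff_sdiff_eq_self (P.le (mem_of_mem_erase (mem_coe.1 hc)))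

end Finpartition

/-- The Möbius function `μ(P, ⊤)` of the partition lattice, for `P` with `k` blocks. -/
def cumulantCoeff (R : Type*) [CommRing R] (k : ℕ) : R :=
  (-1) ^ (k - 1) * (k - 1).factorial

section Cumulant

variable {ι R : Type*} [DecidableEq ι] [CommRing R]

lemma cumulantCoeff_succ_add_mul (k : ℕ) :
    cumulantCoeff R (k + 1) + k * cumulantCoeff R k = if k = 0 then 1 else 0 := by
  cases k with
  | zero => simp [cumulantCoeff]
  | succ k => simp [cumulantCoeff, Nat.factorial_succ, pow_succ]; ring

lemma cumulant_eq_sum_cumulantCoeff (χ : Finset ι → R) (t : Finset ι) :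
    cumulant χ t = ∑ P : Finpartition t, cumulantCoeff R #P.parts * ∏ b ∈ P.parts, χ b :=
  rfl

lemma cumulant_mul_sdiff (χ : Finset ι → R) {s t : Finset ι} (hts : t ⊂ s) :
    cumulant χ t * χ (s \ t) = ∑ P : Finpartition s with s \ t ∈ P.parts,
      cumulantCoeff R (#P.parts - 1) * ∏ b ∈ P.parts, χ b := by
  have hne : s \ t ≠ ⊥ := by simpa [sdiff_eq_empty_iff_subset] using hts.2
  have hdisj : Disjoint t (s \ t) := disjoint_sdiff_self_right
  rw [cumulant_eq_sum_cumulantCoeff, sum_mul,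
    sum_subtype _ (p := fun P : Finpartition s ↦ s \ t ∈ P.parts) (by simp)]
  refine Fintype.sum_equiv (Finpartition.extendEquiv hne hdisj
    (sup_sdiff_cancel_right hts.1)) _ _ fun Q ↦ ?_
  have hnot := Q.notMem_parts_of_disjoint hne hdisj
  simp only [Finpartition.extendEquiv_apply_coe, Finpartition.extend_parts,
    card_insert_of_notMem hnot, add_tsub_cancel_right, prod_insert hnot]
  ring

lemma sum_cumulant_mul_sdiff (χ : Finset ι → R) {s : Finset ι} {i : ι} (hi : i ∈ s) :
    ∑ t ∈ s.powerset.filter (fun t ↦ i ∈ t ∧ t ≠ s), cumulant χ t * χ (s \ t)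
      = ∑ P : Finpartition s,
          ((#P.parts - 1 : ℕ) : R) * (cumulantCoeff R (#P.parts - 1) * ∏ b ∈ P.parts, χ b) := by
  calc _ = ∑ t ∈ s.powerset.filter (fun t ↦ i ∈ t ∧ t ≠ s),
        ∑ P : Finpartition s with s \ t ∈ P.parts,
          cumulantCoeff R (#P.parts - 1) * ∏ b ∈ P.parts, χ b := by
        refine sum_congr rfl fun t ht ↦ cumulant_mul_sdiff χ ?_
        simp only [mem_filter, mem_powerset] at ht
        exact ssubset_of_subset_of_ne ht.1 ht.2.2
    _ = ∑ P : Finpartition s, ∑ t ∈ s.powerset with (i ∈ t ∧ t ≠ s) ∧ s \ t ∈ P.parts,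
        cumulantCoeff R (#P.parts - 1) * ∏ b ∈ P.parts, χ b :=
      sum_comm' fun t P ↦ by simp only [mem_filter, mem_univ, true_and, and_true, and_assoc]
    _ = _ := sum_congr rfl fun P _ ↦ by
        rw [sum_const, P.card_filter_sdiff_mem_parts hi, nsmul_eq_mul]

end Cumulant

theorem stmt_4_general {ι R : Type*} [DecidableEq ι] [CommRing R] (χ : Finset ι → R)
    (s : Finset ι) (i : ι) (hi : i ∈ s) :
    cumulant χ s
      = χ s - ∑ t ∈ s.powerset.filter (fun t => i ∈ t ∧ t ≠ s),
          cumulant χ t * χ (s \ t) := by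
  have hs : s ≠ ⊥ := ne_empty_of_mem hi
  rw [eq_sub_iff_add_eq, sum_cumulant_mul_sdiff χ hi, cumulant_eq_sum_cumulantCoeff,
    ← sum_add_distrib]
  calc _ = ∑ P : Finpartition s, if #P.parts = 1 then ∏ b ∈ P.parts, χ b else 0 := by
        refine sum_congr rfl fun P _ ↦ ?_
        obtain ⟨k, hk⟩ : ∃ k, #P.parts = k + 1 :=
          Nat.exists_eq_add_one.2 (card_pos.2 (P.parts_nonempty hs))
        rw [hk, add_tsub_cancel_right, ← mul_assoc, ← add_mul, cumulantCoeff_succ_add_mul]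
        simp
    _ = χ s := by
        rw [sum_eq_single_of_mem (Finpartition.indiscrete hs) (mem_univ _)]
        · simp
        · intro P _ hP
          rw [if_neg (mt (P.card_parts_eq_one_iff hs).1 hP)]

/-- Recursion for cumulants: for `i ∈ s` nonempty,
`κ(s) = χ(s) − Σ_{i ∈ t ⊊ s} κ(t) χ(s \ t)`. -/
theorem stmt_4 {ι R : Type*} [DecidableEq ι] [CommRing R] (χ : Finset ι → R)
    (s : Finset ι) (hs : s.Nonempty) (i : ι) (hi : i ∈ s) :
    cumulant χ s
      = χ s - ∑ t ∈ s.powerset.filter (fun t => i ∈ t ∧ t ≠ s),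
          cumulant χ t * χ (s \ t) :=
  stmt_4_general χ s i hi
end

section
/- Assume in addition that N ≥ 2 and that X₁ is square-integrable. Then ℙ-almost surely, E[(X₁ − S/N)(X₂ − S/N) | S] = ((S/N)² − E[X₁² | S]) / (N − 1). -/
/-!
An i.i.d. family is exchangeable, and `S` is invariant under permutations, so the joint law of
`(X ∘ σ, S)` equals that of `(X, S)`; as conditional expectations given `S` only depend on such
joint laws, `E[X i | S]` and `E[(X i - S/N)(X j - S/N) | S]` (for `i ≠ j`) do not depend on the
indices. Hence `E[X i | S] = S/N`, so `E[(X i - S/N)² | S] = E[X i² | S] - (S/N)²`, and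
conditioning `(X i - S/N) · ∑ⱼ (X j - S/N) = 0` on `S` gives
`E[(X i - S/N)² | S] + (N - 1) E[(X i - S/N)(X j - S/N) | S] = 0`.
-/

open MeasureTheory ProbabilityTheory

theorem condExp_comap_ae_eq_of_identDistrib {Ω β : Type*} {mΩ : MeasurableSpace Ω}
    {mβ : MeasurableSpace β} {μ : Measure Ω} [IsFiniteMeasure μ] {S : Ω → β}
    (hS : Measurable S) {Y Y' : Ω → ℝ}
    (h : IdentDistrib (fun ω => (S ω, Y ω)) (fun ω => (S ω, Y' ω)) μ μ)
    (hY : Integrable Y μ) :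
    μ[Y | mβ.comap S] =ᵐ[μ] μ[Y' | mβ.comap S] := by
  have hY' : Integrable Y' μ := (h.comp measurable_snd).integrable_iff.mp hY
  have hdistrib : condDistrib Y S μ = condDistrib Y' S μ := by
    simp only [condDistrib, h.map_eq]
  filter_upwards [condExp_ae_eq_integral_condDistrib' hS hY,
    condExp_ae_eq_integral_condDistrib' hS hY'] with ω hω hω'
  rw [hω, hω', hdistrib]

theorem condExp_sub_mul_sub_ae_eq {Ω : Type*} {m mΩ : MeasurableSpace Ω} {μ : Measure Ω}
    [IsFiniteMeasure μ] (hm : m ≤ mΩ) {f c : Ω → ℝ} (hf : MemLp f 2 μ)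
    (hcm : StronglyMeasurable[m] c) (hc : MemLp c 2 μ) (hfc : μ[f | m] =ᵐ[μ] c) :
    μ[fun ω => (f ω - c ω) * (f ω - c ω) | m]
      =ᵐ[μ] fun ω => μ[fun ω => f ω ^ 2 | m] ω - c ω ^ 2 := by
  have hg : MemLp ((2 : ℝ) • f - c) 2 μ := (hf.const_smul 2).sub hc
  have hdecomp : (fun ω => (f ω - c ω) * (f ω - c ω))
      = (fun ω => f ω ^ 2) - c * ((2 : ℝ) • f - c) := by
    ext ω; simp only [Pi.sub_apply, Pi.mul_apply, Pi.smul_apply, smul_eq_mul]; ring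
  rw [hdecomp]
  filter_upwards [condExp_sub hf.integrable_sq (hc.integrable_mul hg) m,
    condExp_mul_of_stronglyMeasurable_left hcm (hc.integrable_mul hg) (hg.integrable one_le_two),
    condExp_sub ((hf.integrable one_le_two).smul (2 : ℝ)) (hc.integrable one_le_two) m,
    condExp_smul (2 : ℝ) f m, hfc] with ω h1 h2 h3 h4 h5
  rw [condExp_of_stronglyMeasurable hm hcm (hc.integrable one_le_two)] at h3
  simp only [h1, h2, h3, h4, h5, Pi.sub_apply, Pi.mul_apply, Pi.smul_apply, smul_eq_mul]
  ring

theorem sum_condExp_mul_ae_eq_zero {Ω ι : Type*} [Fintype ι] {m mΩ : MeasurableSpace Ω}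
    {μ : Measure Ω} {Y : ι → Ω → ℝ} (hY : ∀ j, MemLp (Y j) 2 μ) (hsum : ∀ ω, ∑ j, Y j ω = 0)
    (i : ι) : ∑ j, μ[fun ω => Y i ω * Y j ω | m] =ᵐ[μ] 0 := by
  have hzero : ∑ j, (fun ω => Y i ω * Y j ω) = 0 := by
    ext ω; simp only [Finset.sum_apply, ← Finset.mul_sum, hsum, mul_zero, Pi.zero_apply]
  have h := condExp_finsetSum (f := fun j ω => Y i ω * Y j ω)
    (fun j _ => (hY i).integrable_mul (hY j)) m (s := Finset.univ)
  rw [hzero, condExp_zero] at h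
  exact h.symm

section Exchangeable

variable {Ω ι : Type*} [MeasurableSpace Ω] {P : Measure Ω} [Fintype ι] {X : ι → Ω → ℝ}

theorem identDistrib_comp_perm (hXmeas : ∀ i, Measurable (X i)) (hXindep : iIndepFun X P)
    (hXident : ∀ i j, IdentDistrib (X i) (X j) P P) (σ : Equiv.Perm ι) :
    IdentDistrib (fun ω k => X (σ k) ω) (fun ω k => X k ω) P P where
  aemeasurable_fst := (measurable_pi_lambda _ fun k => hXmeas (σ k)).aemeasurable
  aemeasurable_snd := (measurable_pi_lambda _ hXmeas).aemeasurable
  map_eq := by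
    rw [(hXindep.precomp σ.injective).map_fun_eq_pi_map fun k => (hXmeas _).aemeasurable,
      hXindep.map_fun_eq_pi_map fun k => (hXmeas k).aemeasurable]
    simp only [fun k => (hXident (σ k) k).map_eq]

theorem condExp_comp_perm_ae_eq [IsProbabilityMeasure P] (hXmeas : ∀ i, Measurable (X i))
    (hXindep : iIndepFun X P) (hXident : ∀ i j, IdentDistrib (X i) (X j) P P) {S : Ω → ℝ}
    (hS : S = fun ω => ∑ k, X k ω) (σ : Equiv.Perm ι) {φ : (ι → ℝ) → ℝ → ℝ}
    (hφ : Measurable fun p : (ι → ℝ) × ℝ => φ p.1 p.2)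
    (hint : Integrable (fun ω => φ (X · ω) (S ω)) P) :
    P[fun ω => φ (fun k => X (σ k) ω) (S ω) | MeasurableSpace.comap S (borel ℝ)]
      =ᵐ[P] P[fun ω => φ (X · ω) (S ω) | MeasurableSpace.comap S (borel ℝ)] := by
  have hSmeas : Measurable S := hS ▸ Finset.measurable_sum _ fun k _ => hXmeas k
  have hsum : ∀ ω, ∑ k, X (σ k) ω = S ω := fun ω => by rw [hS, Equiv.sum_comp σ (X · ω)]
  have hG : Measurable fun f : ι → ℝ => (∑ k, f k, φ f (∑ k, f k)) := by fun_prop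
  refine (condExp_comap_ae_eq_of_identDistrib hSmeas ?_ hint).symm
  convert ((identDistrib_comp_perm hXmeas hXindep hXident σ).comp hG).symm using 2 with ω ω
  · simp [hS]
  · simp [hsum]

theorem condExp_ae_eq_sum_div_card [IsProbabilityMeasure P] (hXmeas : ∀ i, Measurable (X i))
    (hXindep : iIndepFun X P) (hXident : ∀ i j, IdentDistrib (X i) (X j) P P)
    (hXint : ∀ i, Integrable (X i) P) {S : Ω → ℝ} (hS : S = fun ω => ∑ k, X k ω) (i : ι) :
    P[X i | MeasurableSpace.comap S (borel ℝ)] =ᵐ[P] fun ω => S ω / Fintype.card ι := by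
  classical
  have hSmeas : Measurable S := hS ▸ Finset.measurable_sum _ fun k _ => hXmeas k
  have hexch : ∀ k, P[X k | MeasurableSpace.comap S (borel ℝ)]
      =ᵐ[P] P[X i | MeasurableSpace.comap S (borel ℝ)] := fun k => by
    simpa using condExp_comp_perm_ae_eq hXmeas hXindep hXident hS (Equiv.swap i k)
      (φ := fun f _ => f i) (by fun_prop) (hXint i)
  have hScond :
      S =ᵐ[P] fun ω => Fintype.card ι * P[X i | MeasurableSpace.comap S (borel ℝ)] ω :=
    calc S = P[S | MeasurableSpace.comap S (borel ℝ)] :=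
          (condExp_of_stronglyMeasurable hSmeas.comap_le (comap_measurable S).stronglyMeasurable
            (hS ▸ integrable_finsetSum _ fun k _ => hXint k)).symm
      _ = P[∑ k, X k | MeasurableSpace.comap S (borel ℝ)] := by
          congr 1; rw [hS]; ext ω; simp
      _ =ᵐ[P] ∑ k, P[X k | MeasurableSpace.comap S (borel ℝ)] :=
          condExp_finsetSum (fun k _ => hXint k) _
      _ =ᵐ[P] _ := by
          filter_upwards [ae_all_iff.2 hexch] with ω hω
          simp [Finset.sum_apply, hω]
  have hcard : (Fintype.card ι : ℝ) ≠ 0 := Nat.cast_ne_zero.2 (Fintype.card_pos_iff.2 ⟨i⟩).ne'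
  filter_upwards [hScond] with ω hω
  rw [hω, mul_div_cancel_left₀ _ hcard]

theorem condExp_centered_sq_ae_eq [IsProbabilityMeasure P] (hXmeas : ∀ i, Measurable (X i))
    (hXindep : iIndepFun X P) (hXident : ∀ i j, IdentDistrib (X i) (X j) P P)
    (hXL2 : ∀ i, MemLp (X i) 2 P) {S : Ω → ℝ} (hS : S = fun ω => ∑ k, X k ω) (i : ι) :
    P[fun ω => (X i ω - S ω / Fintype.card ι) * (X i ω - S ω / Fintype.card ι)
        | MeasurableSpace.comap S (borel ℝ)]
      =ᵐ[P] fun ω =>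
        P[fun ω => X i ω ^ 2 | MeasurableSpace.comap S (borel ℝ)] ω
          - (S ω / Fintype.card ι) ^ 2 := by
  have hSmeas : Measurable S := hS ▸ Finset.measurable_sum _ fun k _ => hXmeas k
  have hSL2 : MemLp S 2 P := hS ▸ memLp_finsetSum _ fun k _ => hXL2 k
  exact condExp_sub_mul_sub_ae_eq hSmeas.comap_le (hXL2 i)
    ((comap_measurable S).div_const _).stronglyMeasurable
    (by simpa only [div_eq_mul_inv] using hSL2.mul_const _)
    (condExp_ae_eq_sum_div_card hXmeas hXindep hXident
      (fun k => (hXL2 k).integrable one_le_two) hS i)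

theorem condExp_centered_mul_ae_eq [IsProbabilityMeasure P] (hXmeas : ∀ i, Measurable (X i))
    (hXindep : iIndepFun X P) (hXident : ∀ i j, IdentDistrib (X i) (X j) P P)
    (hXL2 : ∀ i, MemLp (X i) 2 P) {S : Ω → ℝ} (hS : S = fun ω => ∑ k, X k ω) {i j : ι}
    (hij : i ≠ j) :
    P[fun ω => (X i ω - S ω / Fintype.card ι) * (X j ω - S ω / Fintype.card ι)
        | MeasurableSpace.comap S (borel ℝ)]
      =ᵐ[P] fun ω => ((S ω / Fintype.card ι) ^ 2
          - P[fun ω => X i ω ^ 2 | MeasurableSpace.comap S (borel ℝ)] ω)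
        / (Fintype.card ι - 1) := by
  classical
  set n : ℝ := (Fintype.card ι : ℝ) with hn
  have hn1 : 1 < n := Nat.one_lt_cast.2 (Fintype.one_lt_card_iff_nontrivial.2 ⟨i, j, hij⟩)
  have hSL2 : MemLp S 2 P := hS ▸ memLp_finsetSum _ fun k _ => hXL2 k
  have hYL2 (k : ι) : MemLp (fun ω => X k ω - S ω / n) 2 P := by
    simpa only [div_eq_mul_inv, Pi.sub_def] using (hXL2 k).sub (hSL2.mul_const n⁻¹)
  have hYsum (ω : Ω) : ∑ k, (X k ω - S ω / n) = 0 := by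
    rw [Finset.sum_sub_distrib, Finset.sum_const, Finset.card_univ, nsmul_eq_mul, ← hn,
      mul_div_cancel₀ _ (by positivity), hS, sub_self]
  have hexch : ∀ᵐ ω ∂P, ∀ k, k ≠ i →
      P[fun ω => (X i ω - S ω / n) * (X k ω - S ω / n) | MeasurableSpace.comap S (borel ℝ)] ω
        = P[fun ω => (X i ω - S ω / n) * (X j ω - S ω / n)
            | MeasurableSpace.comap S (borel ℝ)] ω := by
    refine ae_all_iff.2 fun k => ?_
    by_cases hki : k = i
    · exact ae_of_all _ fun _ h => absurd hki h
    have h := condExp_comp_perm_ae_eq hXmeas hXindep hXident hS (Equiv.swap j k)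
      (φ := fun f s => (f i - s / n) * (f j - s / n)) (by fun_prop)
      ((hYL2 i).integrable_mul (hYL2 j))
    simp only [Equiv.swap_apply_of_ne_of_ne hij (Ne.symm hki), Equiv.swap_apply_left] at h
    filter_upwards [h] with ω hω _ using hω
  filter_upwards [hexch, sum_condExp_mul_ae_eq_zero hYL2 hYsum i,
    condExp_centered_sq_ae_eq hXmeas hXindep hXident hXL2 hS i] with ω hω hsum hsq
  rw [← hn] at hsq
  rw [Finset.sum_apply, Pi.zero_apply] at hsum
  have hsplit := Fintype.sum_eq_single (f := fun k =>
      P[fun ω => (X i ω - S ω / n) * (X k ω - S ω / n) | MeasurableSpace.comap S (borel ℝ)] ω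
        - P[fun ω => (X i ω - S ω / n) * (X j ω - S ω / n) | MeasurableSpace.comap S (borel ℝ)] ω)
    i fun k hk => sub_eq_zero.2 (hω k hk)
  rw [Finset.sum_sub_distrib, Finset.sum_const, Finset.card_univ, nsmul_eq_mul, ← hn] at hsplit
  rw [eq_div_iff (sub_ne_zero.2 hn1.ne')]
  linear_combination hsum - hsplit - hsq

end Exchangeable

/-- For iid square-integrable random variables with `N ≥ 2`,
`E[(X₁ − S/N)(X₂ − S/N) | S] = ((S/N)² − E[X₁² | S]) / (N − 1)` a.s. -/
theorem stmt_9 {Ω : Type*} [MeasurableSpace Ω] (P : Measure Ω) [IsProbabilityMeasure P]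
    (N : ℕ) (hN : 2 ≤ N) (X : Fin N → Ω → ℝ) (hXmeas : ∀ i, Measurable (X i))
    (hXindep : iIndepFun X P)
    (hXident : ∀ i j, IdentDistrib (X i) (X j) P P)
    (hXsq : MemLp (X ⟨0, by omega⟩) 2 P)
    (S : Ω → ℝ) (hS : S = fun ω => ∑ i, X i ω) :
    P[fun ω => (X ⟨0, by omega⟩ ω - S ω / N) * (X ⟨1, by omega⟩ ω - S ω / N)
        | MeasurableSpace.comap S (borel ℝ)]
      =ᵐ[P] fun ω =>
        ((S ω / N) ^ 2
            - (P[fun ω => (X ⟨0, by omega⟩ ω) ^ 2 | MeasurableSpace.comap S (borel ℝ)]) ω)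
          / ((N : ℝ) - 1) := by
  have hXL2 (i : Fin N) : MemLp (X i) 2 P := (hXident _ i).memLp_snd hXsq
  simpa only [Fintype.card_fin] using
    condExp_centered_mul_ae_eq hXmeas hXindep hXident hXL2 hS (i := ⟨0, by omega⟩)
      (j := ⟨1, by omega⟩) (by simp)
end

section
/- The conditional distribution of X₁ given S is Gaussian with mean S/N and variance v(1 − 1/N): for (ℙ ∘ S⁻¹)-almost every s ∈ ℝ, condDistrib X₁ S ℙ evaluated at s equals the Gaussian measure on ℝ with mean s/N and variance v·(1 − 1/N). -/
/-!
The residual `W = X₁ - S / N` is uncorrelated with `S`. Since `(S, W)` is a linear image of the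
Gaussian vector `(X₁, …, X_N)`, it is Gaussian, so `W` is independent of `S`, with law
`𝒩(0, v (1 - 1/N))`. Hence, given `S = s`, the variable `X₁ = s / N + W` has law
`𝒩(s / N, v (1 - 1/N))`.
-/

open MeasureTheory ProbabilityTheory
open scoped NNReal

namespace ProbabilityTheory

section IndependentNoise

variable {α β γ : Type*} {mα : MeasurableSpace α} {mβ : MeasurableSpace β}
  {mγ : MeasurableSpace γ}

lemma Kernel.map_id_prod_const_apply (ν : Measure β) [SFinite ν] {f : α × β → γ}
    (hf : Measurable f) (a : α) :
    (Kernel.id ×ₖ Kernel.const α ν).map f a = ν.map (fun b ↦ f (a, b)) := by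
  rw [Kernel.map_apply _ hf, Kernel.prod_apply, Kernel.id_apply, Kernel.const_apply,
    Measure.dirac_prod, Measure.map_map hf measurable_prodMk_left]
  rfl

lemma _root_.MeasureTheory.Measure.map_prod_eq_compProd (μ : Measure α) (ν : Measure β)
    [SFinite μ] [SFinite ν] {f : α × β → γ} (hf : Measurable f) :
    (μ.prod ν).map (fun p ↦ (p.1, f p)) = μ ⊗ₘ (Kernel.id ×ₖ Kernel.const α ν).map f := by
  ext E hE
  rw [Measure.map_apply (by fun_prop) hE, Measure.prod_apply (measurable_fst.prodMk hf hE),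
    Measure.compProd_apply hE]
  refine lintegral_congr fun a ↦ ?_
  rw [Kernel.map_id_prod_const_apply ν hf,
    Measure.map_apply (by fun_prop) (measurable_prodMk_left hE)]
  rfl

lemma condDistrib_ae_eq_of_indepFun [StandardBorelSpace γ] [Nonempty γ] {Ω : Type*}
    {mΩ : MeasurableSpace Ω} {P : Measure Ω} [IsFiniteMeasure P] {S : Ω → α} {W : Ω → β}
    (hS : AEMeasurable S P) (hW : AEMeasurable W P) (hSW : IndepFun S W P)
    {f : α × β → γ} (hf : Measurable f) :
    condDistrib (fun ω ↦ f (S ω, W ω)) S P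
      =ᵐ[P.map S] (Kernel.id ×ₖ Kernel.const α (P.map W)).map f := by
  refine condDistrib_ae_eq_of_measure_eq_compProd S (hf.comp_aemeasurable (hS.prodMk hW)) ?_
  rw [← Measure.map_prod_eq_compProd _ _ hf,
    ← (indepFun_iff_map_prod_eq_prod_map_map hS hW).mp hSW,
    AEMeasurable.map_map_of_aemeasurable (by fun_prop) (hS.prodMk hW)]
  rfl

end IndependentNoise

lemma HasGaussianLaw.condDistrib_ae_eq_gaussianReal {Ω : Type*} {mΩ : MeasurableSpace Ω}
    {P : Measure Ω} [IsProbabilityMeasure P] {S X : Ω → ℝ}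
    (hSX : HasGaussianLaw (fun ω ↦ (S ω, X ω)) P) (hS : Var[S; P] ≠ 0) :
    ∀ᵐ s ∂P.map S, condDistrib X S P s = gaussianReal
      (P[X] + cov[X, S; P] / Var[S; P] * (s - P[S]))
      (Var[X; P] - cov[X, S; P] ^ 2 / Var[S; P]).toNNReal := by
  have hS2 := hSX.fst.memLp_two
  have hX2 := hSX.snd.memLp_two
  set c := cov[X, S; P] / Var[S; P] with hc
  set W := fun ω ↦ X ω - c * S ω
  have hSW : HasGaussianLaw (fun ω ↦ (S ω, W ω)) P :=
    hSX.map_fun ((ContinuousLinearMap.fst ℝ ℝ ℝ).prod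
      (ContinuousLinearMap.snd ℝ ℝ ℝ - c • ContinuousLinearMap.fst ℝ ℝ ℝ))
  have hcov : cov[S, W; P] = 0 := by
    rw [covariance_fun_sub_right hS2 hX2 (hS2.const_mul c), covariance_const_mul_right,
      covariance_self hS2.aemeasurable, covariance_comm, hc, div_mul_cancel₀ _ hS, sub_self]
  have hmean : P[W] = P[X] - c * P[S] := by
    rw [integral_sub hSX.snd.integrable (hSX.fst.integrable.const_mul c), integral_const_mul]
  have hvar : Var[W; P] = Var[X; P] - cov[X, S; P] ^ 2 / Var[S; P] := by
    rw [variance_fun_sub hX2 (hS2.const_mul c), variance_const_mul, covariance_const_mul_right,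
      hc]
    field_simp
    ring
  have hX : X = fun ω ↦ (fun p : ℝ × ℝ ↦ c * p.1 + p.2) (S ω, W ω) := by
    funext ω
    simp [W]
  filter_upwards [condDistrib_ae_eq_of_indepFun hSX.fst.aemeasurable hSW.snd.aemeasurable
    (hSW.indepFun_of_covariance_eq_zero hcov) (f := fun p : ℝ × ℝ ↦ c * p.1 + p.2) (by fun_prop)]
    with s hs
  conv_lhs => rw [hX]
  rw [hs, Kernel.map_id_prod_const_apply _ (by fun_prop), hSW.snd.map_eq_gaussianReal]
  dsimp only
  rw [gaussianReal_map_const_add, hmean, hvar]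
  congr 1
  ring

section IndependentSum

variable {Ω ι : Type*} {mΩ : MeasurableSpace Ω} {P : Measure Ω} [Fintype ι] {X : ι → Ω → ℝ}

lemma iIndepFun.covariance_fun_sum_right [IsProbabilityMeasure P] (hX : ∀ i, MemLp (X i) 2 P)
    (hXi : iIndepFun X P) (i : ι) : cov[X i, fun ω ↦ ∑ j, X j ω; P] = Var[X i; P] := by
  rw [ProbabilityTheory.covariance_fun_sum_right hX (hX i),
    ← covariance_self (hX i).aemeasurable]
  exact Finset.sum_eq_single_of_mem i (Finset.mem_univ i) fun j _ hji ↦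
    (hXi.indepFun hji.symm).covariance_eq_zero (hX i) (hX j)

lemma iIndepFun.variance_fun_sum [IsFiniteMeasure P] (hX : ∀ i, MemLp (X i) 2 P)
    (hXi : iIndepFun X P) : Var[fun ω ↦ ∑ i, X i ω; P] = ∑ i, Var[X i; P] := by
  rw [← Finset.sum_fn]
  exact IndepFun.variance_sum (fun i _ ↦ hX i) fun i _ j _ hij ↦ hXi.indepFun hij

lemma iIndepFun.hasGaussianLaw_sum_prodMk (hX : ∀ i, HasGaussianLaw (X i) P)
    (hXi : iIndepFun X P) (i : ι) : HasGaussianLaw (fun ω ↦ (∑ j, X j ω, X i ω)) P := by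
  simpa using (hXi.hasGaussianLaw hX).map_fun
    ((∑ j, ContinuousLinearMap.proj (R := ℝ) (φ := fun _ : ι ↦ ℝ) j).prod
      (ContinuousLinearMap.proj i))

theorem iIndepFun.condDistrib_ae_eq_gaussianReal_of_sum [IsProbabilityMeasure P] {v : ℝ≥0}
    (hv : v ≠ 0) (hX : ∀ i, HasLaw (X i) (gaussianReal 0 v) P) (hXi : iIndepFun X P) (i : ι) :
    ∀ᵐ s ∂P.map (fun ω ↦ ∑ j, X j ω), condDistrib (X i) (fun ω ↦ ∑ j, X j ω) P s
      = gaussianReal (s / Fintype.card ι) (v * (1 - (Fintype.card ι : ℝ≥0)⁻¹)) := by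
  have hL2 : ∀ j, MemLp (X j) 2 P := fun j ↦ (hX j).hasGaussianLaw.memLp_two
  have hmean : ∀ j, P[X j] = 0 := fun j ↦ by rw [(hX j).integral_eq, integral_id_gaussianReal]
  have hvar : ∀ j, Var[X j; P] = v := fun j ↦ by
    rw [(hX j).variance_eq, variance_id_gaussianReal]
  have hmeanS : P[fun ω ↦ ∑ j, X j ω] = 0 := by
    rw [integral_finsetSum _ fun j _ ↦ (hL2 j).integrable one_le_two]
    simp [hmean]
  have hvarS : Var[fun ω ↦ ∑ j, X j ω; P] = Fintype.card ι * v := by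
    simp [hXi.variance_fun_sum hL2, hvar]
  have hn : (0 : ℝ) < Fintype.card ι := Nat.cast_pos.mpr (Fintype.card_pos_iff.mpr ⟨i⟩)
  filter_upwards [(hXi.hasGaussianLaw_sum_prodMk (fun j ↦ (hX j).hasGaussianLaw) i
    |>.condDistrib_ae_eq_gaussianReal (by rw [hvarS]; positivity))] with s hs
  rw [hs, hmean, hmeanS, hXi.covariance_fun_sum_right hL2, hvar, hvarS]
  have hle : (Fintype.card ι : ℝ≥0)⁻¹ ≤ 1 := inv_le_one_of_one_le₀ (by exact_mod_cast hn)
  have hvar_residual : (v : ℝ) - v ^ 2 / (Fintype.card ι * v)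
      = (v * (1 - (Fintype.card ι : ℝ≥0)⁻¹) : ℝ≥0) := by
    push_cast [NNReal.coe_sub hle]
    field_simp
  rw [hvar_residual, Real.toNNReal_coe]
  congr 1
  field_simp
  ring

end IndependentSum

end ProbabilityTheory

/-- For iid centered Gaussians of variance `v`, the conditional distribution of `X₁` given
`S` is Gaussian with mean `S/N` and variance `v(1 − 1/N)`. -/
theorem stmt_10 {Ω : Type*} [MeasurableSpace Ω] 
    (P : Measure Ω) [IsProbabilityMeasure P]
    (v : NNReal) (hv : 0 < v) (N : ℕ) (hN : 1 ≤ N)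
    (X : Fin N → Ω → ℝ) (hXmeas : ∀ i, Measurable (X i))
    (hXindep : iIndepFun X P)
    (hXlaw : ∀ i, Measure.map (X i) P = gaussianReal 0 v)
    (S : Ω → ℝ) (hS : S = fun ω => ∑ i, X i ω) :
    ∀ᵐ s ∂(Measure.map S P),
      condDistrib (X ⟨0, hN⟩) S P s
        = gaussianReal (s / N) (v * (1 - (N : NNReal)⁻¹)) := by
  subst hS
  simpa only [Fintype.card_fin] using hXindep.condDistrib_ae_eq_gaussianReal_of_sum hv.ne'
    (fun i ↦ ⟨(hXmeas i).aemeasurable, hXlaw i⟩) ⟨0, hN⟩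
end

section
/- For every k ∈ ℕ and all real numbers γ and x, He_k(γ·x) = Σ_{i=0}^{⌊k/2⌋} C(k, 2i) · ((2i)!/(2^i · i!)) · γ^{k−2i} · (γ² − 1)^i · He_{k−2i}(x), where C(k, 2i) is the binomial coefficient and (2i)!/(2^i·i!) is a natural number (the double factorial (2i−1)!!). -/
open Polynomial

/-!
The exponential generating function `H_y(t) = ∑ Heₙ(y) tⁿ / n!` (which is `exp (y t - t² / 2)`)
is the solution of `H' = (y - t) H` with `H(0) = 1`; this ODE is just the three-term recurrence
`He_{n+2} = X He_{n+1} - (n + 1) Heₙ` read off coefficientwise. The product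
`H_x(γ t) · exp ((γ² - 1) t² / 2)` solves the ODE for `y = γ x`, so it equals `H_{γx}(t)`, and
comparing the coefficients of `tᵏ` gives the multiplication theorem.
-/

theorem Nat.two_pow_mul_factorial_dvd_factorial_two_mul (n : ℕ) :
    2 ^ n * n.factorial ∣ (2 * n).factorial := by
  rw [← Nat.doubleFactorial_two_mul]
  rcases n with _ | n
  · simp
  · rw [show 2 * (n + 1) = 2 * n + 1 + 1 by ring, Nat.factorial_eq_mul_doubleFactorial]
    exact dvd_mul_right _ _

theorem Nat.cast_choose_two_mul_mul_factorial_div {K : Type*} [Field K] [CharZero K] {k i : ℕ}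
    (h : 2 * i ≤ k) :
    (k.choose (2 * i) : K) * (((2 * i).factorial / (2 ^ i * i.factorial) : ℕ) : K) =
      k.factorial / ((k - 2 * i).factorial * (2 ^ i * i.factorial)) := by
  have hfac (n : ℕ) : (n.factorial : K) ≠ 0 := Nat.cast_ne_zero.2 n.factorial_ne_zero
  rw [Nat.cast_choose K h, Nat.cast_div (Nat.two_pow_mul_factorial_dvd_factorial_two_mul i)
    (by simpa using hfac i)]
  push_cast
  field_simp [hfac]

theorem Finset.Nat.sum_antidiagonal_ite_two_dvd {M : Type*} [AddCommMonoid M] (k : ℕ)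
    (f : ℕ → ℕ → M) :
    ∑ p ∈ antidiagonal k, (if 2 ∣ p.2 then f p.1 (p.2 / 2) else 0) =
      ∑ i ∈ range (k / 2 + 1), f (k - 2 * i) i := by
  rw [← sum_filter]
  refine sum_nbij' (fun p => p.2 / 2) (fun i => (k - 2 * i, 2 * i)) ?_ ?_ ?_ ?_ ?_
  · simp only [mem_filter, HasAntidiagonal.mem_antidiagonal, mem_range, and_imp, Prod.forall]
    omega
  · simp only [mem_filter, HasAntidiagonal.mem_antidiagonal, mem_range]
    omega
  · simp only [mem_filter, HasAntidiagonal.mem_antidiagonal, Prod.forall, Prod.mk.injEq, and_imp]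
    omega
  · simp
  · simp only [mem_filter, HasAntidiagonal.mem_antidiagonal, and_imp, Prod.forall]
    rintro p q rfl ⟨j, rfl⟩
    simp

namespace Polynomial

theorem derivative_hermite_succ (n : ℕ) :
    derivative (hermite (n + 1)) = (n + 1 : ℤ[X]) * hermite n := by
  induction n with
  | zero => simp [hermite_succ, hermite_zero]
  | succ n ih =>
    rw [hermite_succ (n + 1), derivative_sub, derivative_mul, derivative_X, one_mul, ih,
      derivative_mul]
    simp only [derivative_add, derivative_natCast, derivative_one, add_zero, zero_mul, zero_add]
    push_cast
    linear_combination (-(n : ℤ[X]) - 1) * hermite_succ n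

theorem hermite_succ_succ (n : ℕ) :
    hermite (n + 2) = X * hermite (n + 1) - (n + 1 : ℤ[X]) * hermite n := by
  rw [hermite_succ (n + 1), derivative_hermite_succ]

end Polynomial

namespace PowerSeries

section CommSemiring

variable {R : Type*} [CommSemiring R]

theorem rescale_C (a r : R) : rescale a (C r) = C r := by
  ext n
  rw [coeff_rescale, coeff_C]
  split_ifs with h <;> simp [h]

theorem constantCoeff_rescale (a : R) (f : R⟦X⟧) :
    constantCoeff (rescale a f) = constantCoeff f := by
  rw [← coeff_zero_eq_constantCoeff_apply, coeff_rescale, pow_zero, one_mul,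
    coeff_zero_eq_constantCoeff_apply]

theorem derivative_rescale (a : R) (f : R⟦X⟧) :
    d⁄dX R (rescale a f) = C a * rescale a (d⁄dX R f) := by
  ext n
  simp only [coeff_derivative, coeff_rescale, coeff_C_mul]
  ring

end CommSemiring

theorem derivative_expand {R : Type*} [CommRing R] (p : ℕ) (hp : p ≠ 0) (f : R⟦X⟧) :
    d⁄dX R (expand p hp f) = expand p hp (d⁄dX R f) * d⁄dX R (X ^ p) := by
  simp only [expand_apply]
  exact derivative_subst (.X_pow hp)

variable {K : Type*} [Field K] [CharZero K]

theorem eq_of_derivative_eq_mul {g f h : K⟦X⟧} (hf : d⁄dX K f = g * f)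
    (hh : d⁄dX K h = g * h) (hc : constantCoeff f = constantCoeff h)
    (h0 : constantCoeff h ≠ 0) : f = h := by
  have hinv : h⁻¹ * h = 1 := PowerSeries.inv_mul_cancel h h0
  have hd : d⁄dX K (f * h⁻¹) = d⁄dX K 1 := by
    rw [Derivation.leibniz, derivative_inv', hf, hh, derivative_one, smul_eq_mul, smul_eq_mul]
    linear_combination (-(f * g * h⁻¹)) * hinv
  have hone : f * h⁻¹ = 1 := derivative.ext hd (by simp [hc, h0])
  calc f = f * (h⁻¹ * h) := by rw [hinv, mul_one]
    _ = h := by rw [← mul_assoc, hone, one_mul]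

noncomputable def hermiteEGF (y : K) : K⟦X⟧ :=
  mk fun n => Polynomial.aeval y (hermite n) / n.factorial

theorem constantCoeff_hermiteEGF (y : K) : constantCoeff (hermiteEGF y) = 1 := by
  simp [hermiteEGF]

theorem derivative_hermiteEGF (y : K) :
    d⁄dX K (hermiteEGF y) = (C y - X) * hermiteEGF y := by
  ext (_ | n)
  · simp [hermiteEGF, coeff_derivative]
  · rw [coeff_derivative, sub_mul, map_sub, coeff_C_mul, coeff_succ_X_mul]
    simp only [hermiteEGF, coeff_mk, hermite_succ_succ, map_sub, map_mul, aeval_X, map_add,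
      map_natCast, map_one, Nat.factorial_succ, Nat.cast_mul, Nat.cast_add, Nat.cast_one]
    have h1 : (n : K) + 1 ≠ 0 := Nat.cast_add_one_ne_zero n
    have h2 : (n : K) + 1 + 1 ≠ 0 := by exact_mod_cast Nat.succ_ne_zero (n + 1)
    field_simp

theorem hermiteEGF_mul (γ x : K) :
    hermiteEGF (γ * x) =
      rescale γ (hermiteEGF x) * expand 2 two_ne_zero (rescale ((γ ^ 2 - 1) / 2) (exp K)) := by
  set a := (γ ^ 2 - 1) / 2
  set E := expand 2 two_ne_zero (rescale a (exp K))
  have hH : d⁄dX K (rescale γ (hermiteEGF x)) =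
      (C γ * C x - C γ ^ 2 * X) * rescale γ (hermiteEGF x) := by
    rw [derivative_rescale, derivative_hermiteEGF, map_mul, map_sub, rescale_X, rescale_C]
    ring
  have hE : d⁄dX K E = 2 * C a * X * E := by
    rw [derivative_expand, derivative_rescale, derivative_exp, derivative_pow, derivative_X,
      map_mul, expand_C]
    norm_num [E]
    ring
  have hC : (2 : K⟦X⟧) * C a = C γ ^ 2 - 1 := by
    rw [← map_ofNat C 2, ← map_mul, ← map_pow, ← map_one C, ← map_sub]
    congr 1
    simp only [a]
    ring
  refine eq_of_derivative_eq_mul (derivative_hermiteEGF _) ?_ ?_ ?_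
  · rw [Derivation.leibniz, hH, hE, smul_eq_mul, smul_eq_mul, map_mul]
    linear_combination (rescale γ (hermiteEGF x) * X * E) * hC
  all_goals simp [E, constantCoeff_rescale, constantCoeff_hermiteEGF]

end PowerSeries

theorem Polynomial.aeval_mul_hermite_div_factorial {K : Type*} [Field K] [CharZero K]
    (γ x : K) (k : ℕ) :
    aeval (γ * x) (hermite k) / k.factorial = ∑ i ∈ Finset.range (k / 2 + 1),
      γ ^ (k - 2 * i) * (aeval x (hermite (k - 2 * i)) / (k - 2 * i).factorial) *
        (((γ ^ 2 - 1) / 2) ^ i / i.factorial) := by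
  rw [← Finset.Nat.sum_antidiagonal_ite_two_dvd k (fun p i =>
    γ ^ p * (aeval x (hermite p) / p.factorial) * (((γ ^ 2 - 1) / 2) ^ i / i.factorial))]
  have h := congrArg (PowerSeries.coeff k) (PowerSeries.hermiteEGF_mul γ x)
  rw [PowerSeries.coeff_mul] at h
  simpa [PowerSeries.hermiteEGF, PowerSeries.coeff_rescale, PowerSeries.coeff_expand,
    PowerSeries.coeff_exp, mul_ite, div_eq_mul_inv, mul_assoc] using h

/-- Multiplication theorem for probabilists' Hermite polynomials:
`He_k(γx) = Σ_{i=0}^{⌊k/2⌋} C(k,2i) ((2i)!/(2^i i!)) γ^{k−2i} (γ²−1)^i He_{k−2i}(x)`. -/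
theorem stmt_17 (k : ℕ) (γ x : ℝ) :
    aeval (γ * x) (hermite k)
      = ∑ i ∈ Finset.range (k / 2 + 1),
          (k.choose (2 * i) : ℝ) * (((2 * i).factorial / (2 ^ i * i.factorial) : ℕ) : ℝ)
            * γ ^ (k - 2 * i) * (γ ^ 2 - 1) ^ i * aeval x (hermite (k - 2 * i)) := by
  have h := aeval_mul_hermite_div_factorial γ x k
  rw [div_eq_iff (by positivity), Finset.sum_mul] at h
  rw [h]
  refine Finset.sum_congr rfl fun i hi => ?_
  rw [Nat.cast_choose_two_mul_mul_factorial_div (by simp at hi; omega), div_pow]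
  field_simp
end
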